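/- arXiv:1905.10999 — 3 statements merged into one kernel-verified Lean document; each statement's English description precedes it below -/
import Mathlib

section
/- Let X be a finite set of at least three alternatives and n a positive number of agents. Let f be a social choice function that assigns an alternative of X to every profile of n strict linear preference orders on X, and suppose f is onto X (every alternative is selected under some profile) and strategyproof (no agent i can, at any profile, obtain an outcome that is strictly preferred according to i's true order by reporting a different order, the other agents' reports held fixed). Then f is a dictatorship: there exists an agent i such that at every profile, f selects the top-ranked alternative of agent i's reported order. -/
open Function

namespace GSaux

variable {X : Type*} [Fintype X]

attribute [local instance] Classical.propDecidable

set_option linter.unusedSectionVars false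

noncomputable def p0 (X : Type*) [Fintype X] : X → ℝ :=
  fun x => ((Fintype.equivFin X x : ℕ) : ℝ)

lemma p0_inj : Injective (p0 X) := by
  intro a b h
  have h' : ((Fintype.equivFin X a : ℕ) : ℝ) = ((Fintype.equivFin X b : ℕ) : ℝ) := h
  have h'' : ((Fintype.equivFin X a : ℕ)) = ((Fintype.equivFin X b : ℕ)) := by exact_mod_cast h'
  exact (Fintype.equivFin X).injective (Fin.ext h'')

lemma p0_lt (x : X) : p0 X x < (Fintype.card X : ℝ) := by
  show ((Fintype.equivFin X x : ℕ) : ℝ) < (Fintype.card X : ℝ)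
  exact_mod_cast (Fintype.equivFin X x).is_lt

def Best (A : X → ℝ) (x : X) : Prop := ∀ y, A x ≥ A y

lemma best_gt {A : X → ℝ} (hA : Injective A) {x t : X} (h : Best A x) (ht : t ≠ x) :
    A x > A t := lt_of_le_of_ne (h t) fun e => ht (hA e)

lemma best_eq_of_ge {A : X → ℝ} (hA : Injective A) {x w : X} (h : Best A x)
    (hw : A w ≥ A x) : w = x := by
  by_contra hne
  exact absurd hw (not_le.mpr (best_gt hA h hne))

lemma best_eq {A : X → ℝ} (hA : Injective A) {x w : X} (h : Best A x)
    (hw : Best A w) : w = x := best_eq_of_ge hA h (hw x)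

lemma exists_best [Nonempty X] (A : X → ℝ) : ∃ x, Best A x := by
  obtain ⟨b, -, hb⟩ := Finset.exists_max_image (Finset.univ : Finset X) A
    ⟨Classical.arbitrary X, Finset.mem_univ _⟩
  exact ⟨b, fun y => hb y (Finset.mem_univ y)⟩

lemma exists_third (hX : 3 ≤ Fintype.card X) (a b : X) : ∃ c, c ≠ a ∧ c ≠ b := by
  by_contra hc
  push_neg at hc
  have hsub : (Finset.univ : Finset X) ⊆ {a, b} := by
    intro c _
    simp only [Finset.mem_insert, Finset.mem_singleton]
    by_cases h : c = a
    · exact Or.inl h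
    · exact Or.inr (hc c h)
  have h2 : Fintype.card X ≤ 2 := by
    have h3 := Finset.card_le_card hsub
    rw [Finset.card_univ] at h3
    exact h3.trans ((Finset.card_insert_le a {b}).trans (by simp))
  omega

noncomputable def pt (x : X) : X → ℝ :=
  fun t => if t = x then (Fintype.card X : ℝ) + 2 else p0 X t

lemma pt_inj (x : X) : Injective (pt x) := by
  intro a b hab
  unfold pt at hab
  split_ifs at hab with h1 h2
  · rw [h1, h2]
  · exfalso; have := p0_lt (X := X) b; linarith
  · exfalso; have := p0_lt (X := X) a; linarith
  · exact p0_inj hab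

lemma pt_best (x : X) : Best (pt x) x := by
  intro y
  unfold pt
  rw [if_pos rfl]
  split_ifs with h
  · exact le_refl _
  · have := p0_lt (X := X) y; linarith

noncomputable def pt2 (x z : X) : X → ℝ :=
  fun t => if t = x then (Fintype.card X : ℝ) + 2
    else if t = z then (Fintype.card X : ℝ) + 1 else p0 X t

lemma pt2_inj {x z : X} (hxz : x ≠ z) : Injective (pt2 x z) := by
  intro a b hab
  unfold pt2 at hab
  split_ifs at hab <;>
    first
      | exact p0_inj hab
      | (exfalso; have := p0_lt (X := X) a; have := p0_lt (X := X) b; linarith)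
      | simp_all

lemma pt2_best (x z : X) : Best (pt2 x z) x := by
  intro y
  unfold pt2
  rw [if_pos rfl]
  split_ifs with h1 h2
  · exact le_refl _
  · linarith
  · have := p0_lt (X := X) y; linarith

lemma pt2_snd_gt {x z : X} (hzx : z ≠ x) {t : X} (htx : t ≠ x) (htz : t ≠ z) :
    pt2 x z z > pt2 x z t := by
  unfold pt2
  rw [if_neg hzx, if_pos rfl, if_neg htx, if_neg htz]
  have := p0_lt (X := X) t; linarith

noncomputable def pt3 (a b c : X) : X → ℝ :=
  fun t => if t = a then (Fintype.card X : ℝ) + 4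
    else if t = b then (Fintype.card X : ℝ) + 3
    else if t = c then (Fintype.card X : ℝ) + 2 else p0 X t

lemma pt3_inj {a b c : X} (hba : b ≠ a) (hca : c ≠ a) (hcb : c ≠ b) :
    Injective (pt3 a b c) := by
  intro s t hst
  unfold pt3 at hst
  split_ifs at hst <;>
    first
      | exact p0_inj hst
      | (exfalso; have := p0_lt (X := X) s; have := p0_lt (X := X) t; linarith)
      | simp_all

lemma pt3_best (a b c : X) : Best (pt3 a b c) a := by
  intro y
  unfold pt3
  rw [if_pos rfl]
  split_ifs with h1 h2 h3
  · exact le_refl _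
  · linarith
  · linarith
  · have := p0_lt (X := X) y; linarith

lemma pt3_snd_gt_third {a b c : X} (hba : b ≠ a) (hca : c ≠ a) (hcb : c ≠ b) :
    pt3 a b c b > pt3 a b c c := by
  unfold pt3
  rw [if_neg hba, if_pos rfl, if_neg hca, if_neg hcb, if_pos rfl]
  linarith

lemma pt3_mem {a b c t : X} (hba : b ≠ a) (hca : c ≠ a) (hcb : c ≠ b)
    (h : pt3 a b c t ≥ pt3 a b c c) : t = a ∨ t = b ∨ t = c := by
  by_contra hn
  push_neg at hn
  obtain ⟨h1, h2, h3⟩ := hn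
  unfold pt3 at h
  rw [if_neg h1, if_neg h2, if_neg h3, if_neg hca, if_neg hcb, if_pos rfl] at h
  have := p0_lt (X := X) t
  linarith

structure Two (X : Type*) [Fintype X] where
  h : (X → ℝ) → (X → ℝ) → X
  sp1 : ∀ A A' B, Injective A → Injective A' → Injective B → A (h A B) ≥ A (h A' B)
  sp2 : ∀ A B B', Injective A → Injective B → Injective B' → B (h A B) ≥ B (h A B')
  diag : ∀ A, Injective A → Best A (h A A)

def Two.flip (T : Two X) : Two X where
  h A B := T.h B A
  sp1 A A' B hA hA' hB := T.sp2 B A A' hB hA hA'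
  sp2 A B B' hA hB hB' := T.sp1 B B' A hB hB' hA
  diag := T.diag

lemma Two.mon1 (T : Two X) {A A' B : X → ℝ} {w : X} (hA : Injective A) (hA' : Injective A')
    (hB : Injective B) (hw : T.h A B = w) (hc : ∀ t, A w > A t → A' w > A' t) :
    T.h A' B = w := by
  by_contra hne
  have h1 : A w ≥ A (T.h A' B) := hw ▸ T.sp1 A A' B hA hA' hB
  have h2 : A' (T.h A' B) ≥ A' w := hw ▸ T.sp1 A' A B hA' hA hB
  have h3 : A w > A (T.h A' B) := lt_of_le_of_ne h1 fun e => hne (hA e)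
  have h4 := hc _ h3
  linarith

lemma Two.mon2 (T : Two X) {A B B' : X → ℝ} {w : X} (hA : Injective A) (hB : Injective B)
    (hB' : Injective B') (hw : T.h A B = w) (hc : ∀ t, B w > B t → B' w > B' t) :
    T.h A B' = w :=
  T.flip.mon1 hB hB' hA hw hc

lemma Two.una (T : Two X) {A B : X → ℝ} {x : X} (hA : Injective A) (hB : Injective B)
    (hAx : Best A x) (hBx : Best B x) : T.h A B = x := by
  have h1 : T.h A A = x := best_eq hA hAx (T.diag A hA)
  refine T.mon2 hA hA hB h1 ?_
  intro t ht
  refine best_gt hB hBx ?_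
  rintro rfl
  exact lt_irrefl _ ht

lemma Two.pareto (T : Two X) {A B : X → ℝ} {x z : X} (hA : Injective A) (hB : Injective B)
    (hxz : x ≠ z) (h1 : A x > A z) (h2 : B x > B z) : T.h A B ≠ z := by
  intro hz
  have hA2 : Injective (pt2 x z) := pt2_inj hxz
  have c : ∀ (C : X → ℝ), C x > C z → ∀ t, C z > C t → pt2 x z z > pt2 x z t := by
    intro C hCxz t ht
    have htz : t ≠ z := by rintro rfl; exact lt_irrefl _ ht
    have htx : t ≠ x := by rintro rfl; linarith
    exact pt2_snd_gt hxz.symm htx htz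
  have e1 : T.h (pt2 x z) B = z := T.mon1 hA hA2 hB hz (c A h1)
  have e2 : T.h (pt2 x z) (pt2 x z) = z := T.mon2 hA2 hB hA2 e1 (c B h2)
  have e3 : T.h (pt2 x z) (pt2 x z) = x := best_eq hA2 (pt2_best x z) (T.diag _ hA2)
  exact hxz (e3.symm.trans e2)

lemma Two.key (T : Two X) {x y z : X} (hxy : x ≠ y) (hxz : x ≠ z) (hyz : y ≠ z)
    (h2 : T.h (pt2 x z) (pt2 y z) = z) : T.h (pt2 x z) (pt3 y x z) = x := by
  have injA := pt2_inj hxz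
  have injB := pt2_inj hyz
  have injB'' : Injective (pt3 y x z) := pt3_inj hxy hyz.symm hxz.symm
  have s1 : pt3 y x z (T.h (pt2 x z) (pt3 y x z)) ≥ pt3 y x z z := by
    have := T.sp2 (pt2 x z) (pt3 y x z) (pt2 y z) injA injB'' injB
    rwa [h2] at this
  have hmem := pt3_mem hxy hyz.symm hxz.symm s1
  have s2 : pt2 y z z ≥ pt2 y z (T.h (pt2 x z) (pt3 y x z)) := by
    have := T.sp2 (pt2 x z) (pt2 y z) (pt3 y x z) injA injB injB''
    rwa [h2] at this
  have hwy : T.h (pt2 x z) (pt3 y x z) ≠ y := by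
    intro e
    rw [e] at s2
    have := best_gt injB (pt2_best y z) hyz.symm
    linarith
  have hwz : T.h (pt2 x z) (pt3 y x z) ≠ z := by
    refine T.pareto injA injB'' hxz ?_ ?_
    · exact best_gt injA (pt2_best x z) hxz.symm
    · exact pt3_snd_gt_third hxy hyz.symm hxz.symm
  rcases hmem with h | h | h
  · exact absurd h hwy
  · exact h
  · exact absurd h hwz

lemma Two.L1 (T : Two X) {A B : X → ℝ} {x y : X} (hA : Injective A) (hB : Injective B)
    (hx : Best A x) (hy : Best B y) : T.h A B = x ∨ T.h A B = y := by
  by_cases hxy : x = y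
  · subst hxy; exact Or.inl (T.una hA hB hx hy)
  by_cases hzx : T.h A B = x
  · exact Or.inl hzx
  by_cases hzy : T.h A B = y
  · exact Or.inr hzy
  exfalso
  have hxz : x ≠ T.h A B := Ne.symm hzx
  have hyz : y ≠ T.h A B := Ne.symm hzy
  set z := T.h A B with hzdef
  have injA' := pt2_inj hxz
  have injB' := pt2_inj hyz
  have e1 : T.h (pt2 x z) B = z := by
    refine T.mon1 hA injA' hB rfl ?_
    intro t ht
    have htz : t ≠ z := by rintro rfl; exact lt_irrefl _ ht
    have htx : t ≠ x := by rintro rfl; exact absurd ht (not_lt.mpr (hx z))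
    exact pt2_snd_gt hxz.symm htx htz
  have e2 : T.h (pt2 x z) (pt2 y z) = z := by
    refine T.mon2 injA' hB injB' e1 ?_
    intro t ht
    have htz : t ≠ z := by rintro rfl; exact lt_irrefl _ ht
    have hty : t ≠ y := by rintro rfl; exact absurd ht (not_lt.mpr (hy z))
    exact pt2_snd_gt hyz.symm hty htz
  have h3 : T.h (pt2 x z) (pt3 y x z) = x := T.key hxy hxz hyz e2
  have h4 : T.h (pt3 x y z) (pt2 y z) = y := by
    have hf : T.flip.h (pt2 y z) (pt2 x z) = z := e2
    exact T.flip.key (Ne.symm hxy) hyz hxz hf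
  have injA'' : Injective (pt3 x y z) := pt3_inj (Ne.symm hxy) hxz.symm hyz.symm
  have injB'' : Injective (pt3 y x z) := pt3_inj hxy hyz.symm hxz.symm
  have h5 : T.h (pt3 x y z) (pt3 y x z) = x := by
    have s := T.sp1 (pt3 x y z) (pt2 x z) (pt3 y x z) injA'' injA' injB''
    rw [h3] at s
    exact best_eq_of_ge injA'' (pt3_best x y z) s
  have h6 : T.h (pt3 x y z) (pt3 y x z) = y := by
    have s := T.sp2 (pt3 x y z) (pt3 y x z) (pt2 y z) injA'' injB'' injB'
    rw [h4] at s
    exact best_eq_of_ge injB'' (pt3_best y x z) s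
  exact hxy (h5.symm.trans h6)

lemma Two.welldef (T : Two X) {x y : X} (hxy : x ≠ y) (hwin : T.h (pt x) (pt y) = x)
    {A B : X → ℝ} (hA : Injective A) (hB : Injective B) (hAx : Best A x) (hBy : Best B y) :
    T.h A B = x := by
  have e1 : T.h A (pt y) = x := by
    refine T.mon1 (pt_inj x) hA (pt_inj y) hwin ?_
    intro t ht
    have htx : t ≠ x := by rintro rfl; exact lt_irrefl _ ht
    exact best_gt hA hAx htx
  rcases T.L1 hA hB hAx hBy with h | h
  · exact h
  · exfalso
    have s := T.sp2 A (pt y) B hA (pt_inj y) hB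
    rw [e1, h] at s
    exact absurd s (not_le.mpr (best_gt (pt_inj y) (pt_best y) hxy))

lemma Two.spread1 (T : Two X) {x y : X} (hxy : x ≠ y) (hwin : T.h (pt x) (pt y) = x)
    (y' : X) (hy' : y' ≠ x) : T.h (pt x) (pt y') = x := by
  by_cases hyy : y' = y
  · subst hyy; exact hwin
  rcases T.L1 (pt_inj x) (pt_inj y') (pt_best x) (pt_best y') with h | h
  · exact h
  exfalso
  have hflip : T.flip.h (pt y') (pt x) = y' := h
  have e2 : T.h (pt x) (pt2 y' y) = y' :=
    T.flip.welldef hy' hflip (pt2_inj hyy) (pt_inj x) (pt2_best y' y) (pt_best x)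
  have e1 : T.h (pt x) (pt2 y y') = x :=
    T.welldef hxy hwin (pt_inj x) (pt2_inj fun e => hyy e.symm) (pt_best x) (pt2_best y y')
  have s := T.sp2 (pt x) (pt2 y y') (pt2 y' y) (pt_inj x)
    (pt2_inj fun e => hyy e.symm) (pt2_inj hyy)
  rw [e1, e2] at s
  have := pt2_snd_gt (x := y) (z := y') hyy hxy (Ne.symm hy')
  linarith

lemma Two.half (T : Two X) (hX : 3 ≤ Fintype.card X) {x₀ y₀ : X} (h0 : x₀ ≠ y₀)
    (hwin : T.h (pt x₀) (pt y₀) = x₀) :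
    ∀ A B, Injective A → Injective B → ∀ y, A (T.h A B) ≥ A y := by
  haveI hNe : Nonempty X := Fintype.card_pos_iff.mp (by omega)
  have ha : ∀ y, y ≠ x₀ → T.h (pt x₀) (pt y) = x₀ := fun y hy => T.spread1 h0 hwin y hy
  have hb : ∀ z y, z ≠ y → y ≠ x₀ → T.h (pt z) (pt y) = z := by
    intro z y hzy hyx
    by_cases hz : z = x₀
    · rw [hz]; exact ha y hyx
    rcases T.L1 (pt_inj z) (pt_inj y) (pt_best z) (pt_best y) with h | h
    · exact h
    exfalso
    have hflip : T.flip.h (pt y) (pt z) = y := h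
    have h2 : T.h (pt x₀) (pt y) = y := T.flip.spread1 (Ne.symm hzy) hflip x₀ (Ne.symm hyx)
    rw [ha y hyx] at h2
    exact hyx h2.symm
  have hall : ∀ z y, z ≠ y → T.h (pt z) (pt y) = z := by
    intro z y hzy
    by_cases hyx : y = x₀
    · obtain ⟨w, hwz, hwx⟩ := exists_third hX z x₀
      have h1 := hb z w (Ne.symm hwz) hwx
      have hzx : z ≠ x₀ := fun e => hzy (e.trans hyx.symm)
      rw [hyx]
      exact T.spread1 (Ne.symm hwz) h1 x₀ (Ne.symm hzx)
    · exact hb z y hzy hyx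
  intro A B hA hB y
  obtain ⟨xA, hxA⟩ := exists_best A
  obtain ⟨xB, hxB⟩ := exists_best B
  by_cases hab : xA = xB
  · have := T.una hA hB hxA (hab ▸ hxB)
    rw [this]; exact hxA y
  · have := T.welldef hab (hall xA xB hab) hA hB hxA hxB
    rw [this]; exact hxA y

lemma Two.dict (T : Two X) (hX : 3 ≤ Fintype.card X) :
    (∀ A B, Injective A → Injective B → ∀ y, A (T.h A B) ≥ A y) ∨
    (∀ A B, Injective A → Injective B → ∀ y, B (T.h A B) ≥ B y) := by
  haveI hNt : Nontrivial X := Fintype.one_lt_card_iff_nontrivial.mp (by omega)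
  obtain ⟨x₀, y₀, h0⟩ := exists_pair_ne X
  rcases T.L1 (pt_inj x₀) (pt_inj y₀) (pt_best x₀) (pt_best y₀) with h | h
  · exact Or.inl (T.half hX h0 h)
  · right
    have hflip : T.flip.h (pt y₀) (pt x₀) = y₀ := h
    have hh := T.flip.half hX (Ne.symm h0) hflip
    intro A B hA hB y
    exact hh B A hB hA y

section Profiles

variable {n : ℕ}

lemma inj_update {P : Fin n → X → ℝ} (hP : ∀ j, Injective (P j)) (i : Fin n) {Q : X → ℝ}
    (hQ : Injective Q) : ∀ j, Injective (update P i Q j) := by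
  intro j
  by_cases h : j = i
  · subst h; rw [update_self]; exact hQ
  · rw [update_of_ne h]; exact hP j

lemma sp_back {f : (Fin n → X → ℝ) → X}
    (hsp : ∀ (i : Fin n) (P : Fin n → X → ℝ), (∀ j, Injective (P j)) → ∀ Q, Injective Q →
      P i (f P) ≥ P i (f (update P i Q)))
    {P : Fin n → X → ℝ} (hP : ∀ j, Injective (P j)) (i : Fin n) {Q : X → ℝ}
    (hQ : Injective Q) : Q (f (update P i Q)) ≥ Q (f P) := by
  have h := hsp i (update P i Q) (inj_update hP i hQ) (P i) (hP i)
  rwa [update_self, update_idem, update_eq_self] at h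

lemma hybrid (Φ : (Fin n → X → ℝ) → Prop) (P P' : Fin n → X → ℝ)
    (hP : ∀ j, Injective (P j)) (hP' : ∀ j, Injective (P' j)) (h0 : Φ P)
    (step : ∀ (R : Fin n → X → ℝ) (k : Fin n), (∀ j, Injective (R j)) → Φ R →
      Φ (update R k (P' k))) : Φ P' := by
  let H : ℕ → Fin n → X → ℝ := fun k j => if (j : ℕ) < k then P' j else P j
  have hinj : ∀ k j, Injective (H k j) := by
    intro k j
    by_cases h : (j : ℕ) < k
    · simp only [H, if_pos h]; exact hP' j
    · simp only [H, if_neg h]; exact hP j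
  have key : ∀ k, Φ (H k) := by
    intro k
    induction k with
    | zero =>
      have he : H 0 = P := by funext j; simp [H]
      rwa [he]
    | succ k ih =>
      by_cases hk : k < n
      · have he : H (k + 1) = update (H k) ⟨k, hk⟩ (P' ⟨k, hk⟩) := by
          funext j
          by_cases hj : j = ⟨k, hk⟩
          · subst hj
            rw [update_self]
            simp only [H]
            rw [if_pos (by simp)]
          · rw [update_of_ne hj]
            simp only [H]
            have hjk : (j : ℕ) ≠ k := fun h => hj (Fin.ext h)
            by_cases h2 : (j : ℕ) < k
            · rw [if_pos (by omega), if_pos h2]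
            · rw [if_neg (by omega), if_neg h2]
        rw [he]
        exact step (H k) ⟨k, hk⟩ (hinj k) ih
      · have he : H (k + 1) = H k := by
          funext j
          simp only [H]
          have h1 : (j : ℕ) < k := by have := j.is_lt; omega
          rw [if_pos (by omega), if_pos h1]
        rwa [he]
  have hfin : H n = P' := by
    funext j; simp only [H]; rw [if_pos j.is_lt]
  have h := key n
  rwa [hfin] at h

lemma una {f : (Fin n → X → ℝ) → X}
    (honto : ∀ x, ∃ P, (∀ j, Injective (P j)) ∧ f P = x)
    (hsp : ∀ (i : Fin n) (P : Fin n → X → ℝ), (∀ j, Injective (P j)) → ∀ Q, Injective Q →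
      P i (f P) ≥ P i (f (update P i Q)))
    {x : X} {P : Fin n → X → ℝ} (hP : ∀ j, Injective (P j))
    (htop : ∀ j, Best (P j) x) : f P = x := by
  obtain ⟨P₀, hP₀, hf₀⟩ := honto x
  refine hybrid (fun Q => f Q = x) P₀ P hP₀ hP hf₀ ?_
  intro R k hR hfR
  have h := sp_back hsp hR k (hP k)
  rw [hfR] at h
  exact best_eq_of_ge (hP k) (htop k) h

end Profiles

section Ext

variable {m : ℕ} [NeZero m]

noncomputable def extnd (Q : Fin m → X → ℝ) : Fin (m + 1) → X → ℝ := Fin.cons (Q 0) Q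

lemma extnd_zero (Q : Fin m → X → ℝ) : extnd Q 0 = Q 0 := rfl

lemma extnd_succ (Q : Fin m → X → ℝ) (t : Fin m) : extnd Q t.succ = Q t := by
  simp [extnd]

lemma extnd_inj {Q : Fin m → X → ℝ} (hQ : ∀ j, Injective (Q j)) :
    ∀ j, Injective (extnd Q j) := by
  intro j
  refine Fin.cases ?_ ?_ j
  · simpa [extnd] using hQ 0
  · intro t; simpa [extnd] using hQ t

lemma extnd_tail_update (P : Fin (m + 1) → X → ℝ) (C : X → ℝ) :
    extnd (update (Fin.tail P) 0 C) = update (update P 0 C) (Fin.succ 0) C := by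
  funext j
  refine Fin.cases ?_ ?_ j
  · rw [update_of_ne (Ne.symm (Fin.succ_ne_zero 0)), update_self]
    simp [extnd]
  · intro t
    by_cases ht : t = 0
    · subst ht
      rw [update_self, extnd_succ, update_self]
    · have h1 : Fin.succ t ≠ Fin.succ 0 := fun e => ht (Fin.succ_injective m e)
      have h2 : Fin.succ t ≠ 0 := Fin.succ_ne_zero t
      rw [update_of_ne h1, update_of_ne h2]
      simp only [extnd, Fin.cons_succ]
      rw [update_of_ne ht]
      rfl

lemma extnd_zero_update (Q : Fin m → X → ℝ) (C : X → ℝ) :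
    extnd (update Q 0 C) = update (update (extnd Q) 0 C) (Fin.succ 0) C := by
  have h1 : Fin.tail (extnd Q) = Q := by
    funext t; simp [extnd, Fin.tail]
  have h2 := extnd_tail_update (extnd Q) C
  rw [h1] at h2
  exact h2

lemma extnd_succ_update (Q : Fin m → X → ℝ) (i : Fin m) (C : X → ℝ) (hi : i ≠ 0) :
    extnd (update Q i C) = update (extnd Q) i.succ C := by
  funext j
  refine Fin.cases ?_ ?_ j
  · rw [update_of_ne (Ne.symm (Fin.succ_ne_zero i))]
    show update Q i C 0 = Q 0
    rw [update_of_ne (Ne.symm hi)]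
  · intro t
    by_cases ht : t = i
    · subst ht
      rw [update_self]
      simp [extnd]
    · rw [update_of_ne (fun e => ht (Fin.succ_injective m e))]
      simp only [extnd, Fin.cons_succ]
      rw [update_of_ne ht]

lemma extnd_const (A : X → ℝ) : extnd (fun _ : Fin m => A) = fun _ : Fin (m + 1) => A := by
  funext j
  refine Fin.cases ?_ ?_ j <;> simp [extnd]

end Ext

theorem GS_aux (hX : 3 ≤ Fintype.card X) :
    ∀ (n : ℕ) (f : (Fin n → X → ℝ) → X),
      (∀ x, ∃ P : Fin n → X → ℝ, (∀ j, Injective (P j)) ∧ f P = x) →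
      (∀ (i : Fin n) (P : Fin n → X → ℝ), (∀ j, Injective (P j)) →
        ∀ Q : X → ℝ, Injective Q → P i (f P) ≥ P i (f (update P i Q))) →
      1 ≤ n → ∃ i : Fin n, ∀ P : Fin n → X → ℝ,
        (∀ j, Injective (P j)) → ∀ x, P i (f P) ≥ P i x := by
  haveI hNe : Nonempty X := Fintype.card_pos_iff.mp (by omega)
  haveI hNt : Nontrivial X := Fintype.one_lt_card_iff_nontrivial.mp (by omega)
  intro n
  induction n with
  | zero => intro f _ _ hn; omega
  | succ m ih =>
    intro f honto hsp _
    by_cases hm : m = 0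
    · -- base case: one voter
      subst hm
      refine ⟨0, ?_⟩
      intro P hP x
      obtain ⟨Py, hPy, hfy⟩ := honto x
      have h := hsp 0 P hP (Py 0) (hPy 0)
      have he : update P 0 (Py 0) = Py := by
        haveI : Subsingleton (Fin (0 + 1)) := Fin.subsingleton_one
        funext j
        have hj : j = 0 := Subsingleton.elim j 0
        rw [hj, update_self]
      rw [he, hfy] at h
      exact h
    · haveI : NeZero m := ⟨hm⟩
      have hi10 : (Fin.succ (0 : Fin m)) ≠ 0 := Fin.succ_ne_zero 0
      -- g is strategyproof
      have gsp : ∀ (i : Fin m) (Q : Fin m → X → ℝ), (∀ j, Injective (Q j)) →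
          ∀ C : X → ℝ, Injective C →
            Q i (f (extnd Q)) ≥ Q i (f (extnd (update Q i C))) := by
        intro i Q hQ C hC
        by_cases hi : i = 0
        · subst hi
          have h1 := hsp 0 (extnd Q) (extnd_inj hQ) C hC
          rw [extnd_zero] at h1
          have h2 := hsp (Fin.succ 0) (update (extnd Q) 0 C)
            (inj_update (extnd_inj hQ) 0 hC) C hC
          have e1 : (update (extnd Q) 0 C) (Fin.succ 0) = Q 0 := by
            rw [update_of_ne hi10, extnd_succ]
          rw [e1] at h2
          rw [extnd_zero_update]
          exact le_trans h2 h1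
        · rw [extnd_succ_update Q i C hi]
          have h := hsp i.succ (extnd Q) (extnd_inj hQ) C hC
          rwa [extnd_succ] at h
      -- g is onto
      have gonto : ∀ x, ∃ Q : Fin m → X → ℝ, (∀ j, Injective (Q j)) ∧ f (extnd Q) = x := by
        intro x
        refine ⟨fun _ => pt x, fun _ => pt_inj x, ?_⟩
        rw [extnd_const]
        exact una honto hsp (fun _ => pt_inj x) (fun _ => pt_best x)
      obtain ⟨d, hd⟩ := ih (fun Q => f (extnd Q)) gonto gsp (by omega)
      have hd' : ∀ Q : Fin m → X → ℝ, (∀ j, Injective (Q j)) →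
          ∀ y, Q d (f (extnd Q)) ≥ Q d y := hd
      by_cases hd0 : d = 0
      · -- the cloned voter is g's dictator: two-voter analysis on coordinates 0, succ 0
        subst hd0
        have dichot : ∀ (P : Fin (m + 1) → X → ℝ), (∀ j, Injective (P j)) →
            (∀ A B, Injective A → Injective B →
              ∀ y, A (f (update (update P 0 A) (Fin.succ 0) B)) ≥ A y) ∨
            (∀ A B, Injective A → Injective B →
              ∀ y, B (f (update (update P 0 A) (Fin.succ 0) B)) ≥ B y) := by
          intro P hP
          refine Two.dict ⟨fun A B => f (update (update P 0 A) (Fin.succ 0) B), ?_, ?_, ?_⟩ hX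
          · intro A A' B hA hA' hB
            have h := hsp 0 (update (update P 0 A) (Fin.succ 0) B)
              (inj_update (inj_update hP 0 hA) (Fin.succ 0) hB) A' hA'
            have e0 : (update (update P 0 A) (Fin.succ 0) B) 0 = A := by
              rw [update_of_ne (Ne.symm hi10), update_self]
            have e1 : update (update (update P 0 A) (Fin.succ 0) B) 0 A' =
                update (update P 0 A') (Fin.succ 0) B := by
              rw [update_comm hi10, update_idem]
            rw [e0, e1] at h
            exact h
          · intro A B B' hA hB hB'
            have h := hsp (Fin.succ 0) (update (update P 0 A) (Fin.succ 0) B)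
              (inj_update (inj_update hP 0 hA) (Fin.succ 0) hB) B' hB'
            rw [update_self, update_idem] at h
            exact h
          · intro A hA
            have hQinj : ∀ j, Injective (update (Fin.tail P) 0 A j) :=
              inj_update (fun j => hP j.succ) 0 hA
            intro y
            have h := hd' (update (Fin.tail P) 0 A) hQinj y
            rw [extnd_tail_update, update_self] at h
            exact h
        by_cases hbase : ∀ A B, Injective A → Injective B → ∀ y,
            A (f (update (update (fun _ : Fin (m + 1) => p0 X) 0 A) (Fin.succ 0) B)) ≥ A y
        · -- voter 0 is the dictator
          refine ⟨0, ?_⟩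
          intro P hP x
          have hall : ∀ A B, Injective A → Injective B → ∀ y,
              A (f (update (update P 0 A) (Fin.succ 0) B)) ≥ A y := by
            refine hybrid (fun R => ∀ A B, Injective A → Injective B → ∀ y,
              A (f (update (update R 0 A) (Fin.succ 0) B)) ≥ A y)
              (fun _ => p0 X) P (fun _ => p0_inj) hP hbase ?_
            intro R k hR hΦ
            by_cases hk0 : k = 0
            · subst hk0
              intro A B hA hB y
              rw [update_idem]
              exact hΦ A B hA hB y
            · by_cases hk1 : k = Fin.succ 0
              · subst hk1
                intro A B hA hB y
                rw [update_comm hi10, update_idem]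
                exact hΦ A B hA hB y
              · rcases dichot (update R k (P k)) (inj_update hR k (hP k)) with h1 | h2
                · exact h1
                · exfalso
                  obtain ⟨y₀, hy₀⟩ := exists_best (R k)
                  obtain ⟨x₀, hx₀⟩ := exists_ne y₀
                  have e1 : f (update (update R 0 (pt x₀)) (Fin.succ 0) (pt y₀)) = x₀ :=
                    best_eq_of_ge (pt_inj x₀) (pt_best x₀)
                      (hΦ (pt x₀) (pt y₀) (pt_inj x₀) (pt_inj y₀) x₀)
                  have e2 : f (update (update (update R k (P k)) 0 (pt x₀))
                      (Fin.succ 0) (pt y₀)) = y₀ :=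
                    best_eq_of_ge (pt_inj y₀) (pt_best y₀)
                      (h2 (pt x₀) (pt y₀) (pt_inj x₀) (pt_inj y₀) y₀)
                  have ecomm : update (update (update R k (P k)) 0 (pt x₀))
                      (Fin.succ 0) (pt y₀) =
                      update (update (update R 0 (pt x₀)) (Fin.succ 0) (pt y₀)) k (P k) := by
                    rw [update_comm hk0, update_comm hk1]
                  rw [ecomm] at e2
                  have hs := hsp k (update (update R 0 (pt x₀)) (Fin.succ 0) (pt y₀))
                    (inj_update (inj_update hR 0 (pt_inj x₀)) (Fin.succ 0) (pt_inj y₀))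
                    (P k) (hP k)
                  have hMk : (update (update R 0 (pt x₀)) (Fin.succ 0) (pt y₀)) k = R k := by
                    rw [update_of_ne hk1, update_of_ne hk0]
                  rw [hMk, e1, e2] at hs
                  exact absurd hs (not_le.mpr (best_gt (hR k) hy₀ hx₀))
          have he : update (update P 0 (P 0)) (Fin.succ 0) (P (Fin.succ 0)) = P := by
            rw [update_eq_self, update_eq_self]
          have h := hall (P 0) (P (Fin.succ 0)) (hP 0) (hP (Fin.succ 0)) x
          rwa [he] at h
        · -- voter (succ 0) is the dictator
          have hbase2 : ∀ A B, Injective A → Injective B → ∀ y,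
              B (f (update (update (fun _ : Fin (m + 1) => p0 X) 0 A) (Fin.succ 0) B)) ≥ B y := by
            rcases dichot (fun _ => p0 X) (fun _ => p0_inj) with h1 | h2
            · exact absurd h1 hbase
            · exact h2
          refine ⟨Fin.succ 0, ?_⟩
          intro P hP x
          have hall : ∀ A B, Injective A → Injective B → ∀ y,
              B (f (update (update P 0 A) (Fin.succ 0) B)) ≥ B y := by
            refine hybrid (fun R => ∀ A B, Injective A → Injective B → ∀ y,
              B (f (update (update R 0 A) (Fin.succ 0) B)) ≥ B y)
              (fun _ => p0 X) P (fun _ => p0_inj) hP hbase2 ?_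
            intro R k hR hΦ
            by_cases hk0 : k = 0
            · subst hk0
              intro A B hA hB y
              rw [update_idem]
              exact hΦ A B hA hB y
            · by_cases hk1 : k = Fin.succ 0
              · subst hk1
                intro A B hA hB y
                rw [update_comm hi10, update_idem]
                exact hΦ A B hA hB y
              · rcases dichot (update R k (P k)) (inj_update hR k (hP k)) with h1 | h2
                · exfalso
                  obtain ⟨x₀, hx₀⟩ := exists_best (R k)
                  obtain ⟨y₀, hy₀⟩ := exists_ne x₀
                  have e1 : f (update (update R 0 (pt x₀)) (Fin.succ 0) (pt y₀)) = y₀ :=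
                    best_eq_of_ge (pt_inj y₀) (pt_best y₀)
                      (hΦ (pt x₀) (pt y₀) (pt_inj x₀) (pt_inj y₀) y₀)
                  have e2 : f (update (update (update R k (P k)) 0 (pt x₀))
                      (Fin.succ 0) (pt y₀)) = x₀ :=
                    best_eq_of_ge (pt_inj x₀) (pt_best x₀)
                      (h1 (pt x₀) (pt y₀) (pt_inj x₀) (pt_inj y₀) x₀)
                  have ecomm : update (update (update R k (P k)) 0 (pt x₀))
                      (Fin.succ 0) (pt y₀) =
                      update (update (update R 0 (pt x₀)) (Fin.succ 0) (pt y₀)) k (P k) := by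
                    rw [update_comm hk0, update_comm hk1]
                  rw [ecomm] at e2
                  have hs := hsp k (update (update R 0 (pt x₀)) (Fin.succ 0) (pt y₀))
                    (inj_update (inj_update hR 0 (pt_inj x₀)) (Fin.succ 0) (pt_inj y₀))
                    (P k) (hP k)
                  have hMk : (update (update R 0 (pt x₀)) (Fin.succ 0) (pt y₀)) k = R k := by
                    rw [update_of_ne hk1, update_of_ne hk0]
                  rw [hMk, e1, e2] at hs
                  exact absurd hs (not_le.mpr (best_gt (hR k) hx₀ hy₀))
                · exact h2
          have he : update (update P 0 (P 0)) (Fin.succ 0) (P (Fin.succ 0)) = P := by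
            rw [update_eq_self, update_eq_self]
          have h := hall (P 0) (P (Fin.succ 0)) (hP 0) (hP (Fin.succ 0)) x
          rwa [he] at h
      · -- some non-cloned voter is g's dictator: voter d.succ dictates for f
        refine ⟨d.succ, ?_⟩
        intro P hP x
        have key : ∀ C : X → ℝ, Injective C →
            ∀ y, P d.succ (f (update (update P 0 C) (Fin.succ 0) C)) ≥ P d.succ y := by
          intro C hC y
          have hQinj : ∀ j, Injective (update (Fin.tail P) 0 C j) :=
            inj_update (fun j => hP j.succ) 0 hC
          have h := hd' (update (Fin.tail P) 0 C) hQinj y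
          rw [extnd_tail_update] at h
          have hQd : (update (Fin.tail P) 0 C) d = P d.succ := by
            rw [update_of_ne hd0]; rfl
          rwa [hQd] at h
        have e1 : update (update P 0 (P 0)) (Fin.succ 0) (P 0) =
            update P (Fin.succ 0) (P 0) := by
          rw [update_eq_self]
        have e2 : update (update P 0 (P (Fin.succ 0))) (Fin.succ 0) (P (Fin.succ 0)) =
            update P 0 (P (Fin.succ 0)) := by
          funext j
          by_cases hj : j = Fin.succ 0
          · subst hj; rw [update_self, update_of_ne hi10]
          · rw [update_of_ne hj]
        have h1 : ∀ y, P d.succ (f (update P (Fin.succ 0) (P 0))) ≥ P d.succ y := by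
          intro y
          have h := key (P 0) (hP 0) y
          rwa [e1] at h
        have h2 : ∀ y, P d.succ (f (update P 0 (P (Fin.succ 0)))) ≥ P d.succ y := by
          intro y
          have h := key (P (Fin.succ 0)) (hP (Fin.succ 0)) y
          rwa [e2] at h
        have hxx : f (update P 0 (P (Fin.succ 0))) = f (update P (Fin.succ 0) (P 0)) :=
          best_eq (hP d.succ) h1 h2
        have s1 := hsp (Fin.succ 0) P hP (P 0) (hP 0)
        have s2 := hsp 0 (update P 0 (P (Fin.succ 0)))
          (inj_update hP 0 (hP (Fin.succ 0))) (P 0) (hP 0)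
        have eWb : update (update P 0 (P (Fin.succ 0))) 0 (P 0) = P := by
          rw [update_idem, update_eq_self]
        rw [update_self, eWb, hxx] at s2
        have hval : P (Fin.succ 0) (f P) = P (Fin.succ 0) (f (update P (Fin.succ 0) (P 0))) :=
          le_antisymm s2 s1
        have hfP : f P = f (update P (Fin.succ 0) (P 0)) := hP (Fin.succ 0) hval
        rw [hfP]
        exact h1 x

end GSaux

/-- **Gibbard–Satterthwaite theorem** (cardinal representation of strict linear orders).
`X` is a finite set of at least three alternatives, `n ≥ 1` agents. A profile assigns to
each agent an injective function `X → ℝ` (larger value = more preferred, representing a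
strict linear order). If the social choice function `f` is onto and strategyproof, then
it is a dictatorship: some agent `i`'s top-ranked alternative is always selected. -/
theorem gibbard_satterthwaite
    {X : Type*} [Fintype X] {n : ℕ} (hn : 1 ≤ n) (hX : 3 ≤ Fintype.card X)
    (f : (Fin n → X → ℝ) → X)
    (honto : ∀ x : X, ∃ P : Fin n → X → ℝ,
      (∀ j : Fin n, Function.Injective (P j)) ∧ f P = x)
    (hsp : ∀ (i : Fin n) (P : Fin n → X → ℝ),
      (∀ j : Fin n, Function.Injective (P j)) →
      ∀ Q : X → ℝ, Function.Injective Q →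
        P i (f P) ≥ P i (f (Function.update P i Q))) :
    ∃ i : Fin n, ∀ P : Fin n → X → ℝ,
      (∀ j : Fin n, Function.Injective (P j)) →
      ∀ x : X, P i (f P) ≥ P i x := by
  exact GSaux.GS_aux hX n f honto hsp hn
end

section
/- Let X be a finite set of at least three candidate architectures and n ≥ 1 stakeholders, and let A be a software architecture selection method defined on profiles of injective reported benefit functions rᵢ : X → ℝ, with A onto X. If A is not a dictatorship (i.e., there is no stakeholder i with rᵢ(A(r)) ≥ rᵢ(x) for every profile r and every x ∈ X), then A is manipulable: there exist a stakeholder i, a profile u of injective benefit functions (interpreted as the true benefits), and an injective function v : X → ℝ such that uᵢ(A(u with i-th component replaced by v)) > uᵢ(A(u)); that is, stakeholder i can strictly increase her true benefit by misreporting. -/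
/-!
A strategy-proof method is Maskin monotone: if no stakeholder's report moves an alternative above
the selected one, the selection stays (change one report at a time and compare the truthful with
the deviating report). With surjectivity this gives Pareto efficiency. Say that `S` wins `a`
against `b` if `a` is selected when `S` ranks `a` first and `b` second and everyone else ranks `b`
first and `a` second. Rank three alternatives `abc` on `S`, `cab` on a disjoint `T` and `bca`
elsewhere: erasing an unselected alternative from all rankings keeps the selection, and erasing
`c`, `b` or `a` yields the profiles testing `S ∪ T` on `(a, b)`, `S` on `(a, c)` and `T` on
`(c, b)`. So if `S ∪ T` wins `a` against `b`, then `S` wins `a` against `c` or `T` wins `c` against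
`b`; with `T` or `S` empty this spreads one win of a coalition to all pairs. The whole electorate
wins every pair, so a minimal coalition doing so is a singleton, whose member is a dictator.
-/

open Function

namespace GibbardSatterthwaite

variable {X : Type*}

def IsMonotoneTransformAt (u v : X → ℝ) (x : X) : Prop :=
  ∀ y, u y ≤ u x → v y ≤ v x

lemma isMonotoneTransformAt_refl (u : X → ℝ) (x : X) : IsMonotoneTransformAt u u x :=
  fun _ h => h

lemma isMonotoneTransformAt_of_forall_le {u v : X → ℝ} {x : X} (h : ∀ y, v y ≤ v x) :
    IsMonotoneTransformAt u v x :=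
  fun y _ => h y

section toTop

variable [Fintype X] [DecidableEq X]

noncomputable def toTop (u : X → ℝ) (a : X) : X → ℝ :=
  update u a (∑ x, |u x| + 1)

variable {u v : X → ℝ} {a x y w : X}

lemma toTop_of_ne (h : y ≠ a) : toTop u a y = u y :=
  update_of_ne h _ _

lemma lt_toTop_self (u : X → ℝ) (a y : X) : u y < toTop u a a := by
  have : u y ≤ ∑ x, |u x| :=
    (le_abs_self _).trans (Finset.single_le_sum (fun x _ => abs_nonneg (u x)) (Finset.mem_univ y))
  rw [toTop, update_self]
  linarith

lemma toTop_lt_toTop_self (h : y ≠ a) : toTop u a y < toTop u a a := by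
  rw [toTop_of_ne h]
  exact lt_toTop_self u a y

lemma toTop_le_toTop_self (u : X → ℝ) (a y : X) : toTop u a y ≤ toTop u a a := by
  rcases eq_or_ne y a with rfl | h
  · exact le_rfl
  · exact (toTop_lt_toTop_self h).le

lemma injective_toTop (hu : Injective u) (a : X) : Injective (toTop u a) := by
  intro x y hxy
  rcases eq_or_ne x a with rfl | hx
  · by_contra hy
    exact (toTop_lt_toTop_self (Ne.symm hy)).ne hxy.symm
  rcases eq_or_ne y a with rfl | hy
  · exact absurd hxy (toTop_lt_toTop_self hx).ne
  · rw [toTop_of_ne hx, toTop_of_ne hy] at hxy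
    exact hu hxy

lemma IsMonotoneTransformAt.toTop_toTop (h : IsMonotoneTransformAt u v x) (a : X) :
    IsMonotoneTransformAt (toTop u a) (toTop v a) x := by
  intro y hy
  rcases eq_or_ne x a with rfl | hx
  · exact toTop_le_toTop_self v x y
  rcases eq_or_ne y a with rfl | hya
  · rw [toTop_of_ne hx] at hy
    exact absurd hy (lt_toTop_self u y x).not_ge
  · rw [toTop_of_ne hx, toTop_of_ne hya] at hy ⊢
    exact h y hy

lemma IsMonotoneTransformAt.toTop_right (h : IsMonotoneTransformAt u v x) (ha : u x < u a) :
    IsMonotoneTransformAt u (toTop v a) x := by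
  have hxa : x ≠ a := by rintro rfl; exact lt_irrefl _ ha
  intro y hy
  have hya : y ≠ a := by rintro rfl; exact absurd hy ha.not_ge
  rw [toTop_of_ne hxa, toTop_of_ne hya]
  exact h y hy

lemma isMonotoneTransformAt_toTop_left (hx : x ≠ a) : IsMonotoneTransformAt (toTop u a) u x := by
  intro y hy
  rw [toTop_of_ne hx] at hy
  have hya : y ≠ a := by rintro rfl; exact absurd hy (lt_toTop_self u y x).not_ge
  rwa [toTop_of_ne hya] at hy

/-- `raise l u` puts the alternatives of `l` on top of `u`, in the order of their first
occurrence in `l`. -/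
noncomputable def raise (l : List X) (u : X → ℝ) : X → ℝ :=
  l.foldr (fun a v => toTop v a) u

lemma injective_raise (hu : Injective u) : ∀ l : List X, Injective (raise l u)
  | [] => hu
  | a :: l => injective_toTop (injective_raise hu l) a

lemma raise_lt_raise {l : List X} (hx : x ∈ l) (hy : y ∉ l) : raise l u y < raise l u x := by
  induction l with
  | nil => simp at hx
  | cons a l ih =>
    rw [List.mem_cons, not_or] at hy
    change toTop (raise l u) a y < toTop (raise l u) a x
    rw [toTop_of_ne hy.1]
    rcases eq_or_ne x a with rfl | hxa
    · exact lt_toTop_self _ x y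
    · rw [toTop_of_ne hxa]
      exact ih ((List.mem_cons.1 hx).resolve_left hxa) hy.2

lemma isMonotoneTransformAt_raise_erase (hw : w ≠ x) (u : X → ℝ) :
    ∀ l : List X, IsMonotoneTransformAt (raise l u) (raise (l.erase w) u) x
  | [] => isMonotoneTransformAt_refl _ _
  | a :: l => by
    rcases eq_or_ne a w with rfl | ha
    · rw [List.erase_cons_head]
      exact isMonotoneTransformAt_toTop_left hw.symm
    · rw [List.erase_cons_tail (by simpa using ha)]
      exact (isMonotoneTransformAt_raise_erase hw u l).toTop_toTop a

end toTop

variable {n : ℕ}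

def IsStrategyProof (A : (Fin n → X → ℝ) → X) : Prop :=
  ∀ (i : Fin n) (u : Fin n → X → ℝ) (v : X → ℝ), (∀ j, Injective (u j)) → Injective v →
    u i (A (update u i v)) ≤ u i (A u)

def IsOnto (A : (Fin n → X → ℝ) → X) : Prop :=
  ∀ x, ∃ r : Fin n → X → ℝ, (∀ j, Injective (r j)) ∧ A r = x

namespace IsStrategyProof

variable {A : (Fin n → X → ℝ) → X}

lemma choice_update_eq (hA : IsStrategyProof A) {u : Fin n → X → ℝ} {i : Fin n} {v : X → ℝ}
    (hu : ∀ j, Injective (u j)) (hv : Injective v) (h : IsMonotoneTransformAt (u i) v (A u)) :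
    A (update u i v) = A u := by
  have hu' : ∀ j, Injective (update u i v j) := by
    intro j
    rcases eq_or_ne j i with rfl | hj
    · simpa using hv
    · simpa [hj] using hu j
  have truthful := hA i u v hu hv
  have deviating := hA i (update u i v) (u i) hu' (hu i)
  rw [update_idem, update_eq_self, update_self] at deviating
  exact hv (le_antisymm (h _ truthful) deviating)

lemma choice_eq_of_isMonotoneTransformAt (hA : IsStrategyProof A) {u u' : Fin n → X → ℝ}
    (hu : ∀ j, Injective (u j)) (hu' : ∀ j, Injective (u' j))
    (h : ∀ i, IsMonotoneTransformAt (u i) (u' i) (A u)) : A u' = A u := by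
  suffices ∀ s : Finset (Fin n), A (s.piecewise u' u) = A u by
    simpa using this Finset.univ
  intro s
  induction s using Finset.induction_on with
  | empty => simp
  | insert i s hi ih =>
    have hs : ∀ j, Injective (s.piecewise u' u j) := fun j => by
      by_cases hj : j ∈ s <;> simp [hj, hu j, hu' j]
    have hi' : IsMonotoneTransformAt (s.piecewise u' u i) (u' i) (A (s.piecewise u' u)) := by
      rw [ih, Finset.piecewise_eq_of_notMem _ _ _ hi]
      exact h i
    rw [Finset.piecewise_insert, hA.choice_update_eq hs (hu' i) hi', ih]

lemma choice_eq_of_forall_le (hA : IsStrategyProof A) (honto : IsOnto A) {u : Fin n → X → ℝ}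
    (hu : ∀ j, Injective (u j)) {x : X} (hx : ∀ i y, u i y ≤ u i x) : A u = x := by
  obtain ⟨r, hr, rfl⟩ := honto x
  exact hA.choice_eq_of_isMonotoneTransformAt hr hu fun i =>
    isMonotoneTransformAt_of_forall_le (hx i)

variable [Fintype X] [DecidableEq X]

lemma choice_ne_of_forall_lt (hA : IsStrategyProof A) (honto : IsOnto A) {u : Fin n → X → ℝ}
    (hu : ∀ j, Injective (u j)) {b c : X} (hbc : b ≠ c) (h : ∀ i, u i c < u i b) : A u ≠ c := by
  intro hc
  have hv : ∀ i, Injective (toTop (u i) b) := fun i => injective_toTop (hu i) b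
  have stays : A (fun i => toTop (u i) b) = c := by
    rw [hA.choice_eq_of_isMonotoneTransformAt hu hv fun i => by
      rw [hc]; exact (isMonotoneTransformAt_refl _ _).toTop_right (h i), hc]
  have pareto : A (fun i => toTop (u i) b) = b :=
    hA.choice_eq_of_forall_le honto hv fun i => toTop_le_toTop_self _ b
  exact hbc (pareto.symm.trans stays)

end IsStrategyProof

section Decisive

variable [Fintype X] [DecidableEq X]

noncomputable def listProfile (L : Fin n → List X) : Fin n → X → ℝ :=
  fun i => raise (L i) fun x => ((Fintype.equivFin X x : ℕ) : ℝ)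

lemma injective_listProfile (L : Fin n → List X) (i : Fin n) : Injective (listProfile L i) :=
  injective_raise
    (Nat.cast_injective.comp (Fin.val_injective.comp (Fintype.equivFin X).injective)) _

def pairLists (S : Finset (Fin n)) (a b : X) (i : Fin n) : List X :=
  if i ∈ S then [a, b] else [b, a]

def cyclicLists (S T : Finset (Fin n)) (a b c : X) (i : Fin n) : List X :=
  if i ∈ S then [a, b, c] else if i ∈ T then [c, a, b] else [b, c, a]

def Wins (A : (Fin n → X → ℝ) → X) (S : Finset (Fin n)) (a b : X) : Prop :=
  A (listProfile (pairLists S a b)) = a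

def IsDecisive (A : (Fin n → X → ℝ) → X) (S : Finset (Fin n)) : Prop :=
  ∀ a b : X, a ≠ b → Wins A S a b

variable {A : (Fin n → X → ℝ) → X}

namespace IsStrategyProof

lemma choice_listProfile_mem (hA : IsStrategyProof A) (honto : IsOnto A) {L : Fin n → List X}
    {l : List X} (hL : ∀ i y, y ∈ L i ↔ y ∈ l) {a : X} (ha : a ∈ l) :
    A (listProfile L) ∈ l := by
  by_contra hx
  refine hA.choice_ne_of_forall_lt honto (injective_listProfile L) (ne_of_mem_of_not_mem ha hx)
    (fun i => ?_) rfl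
  exact raise_lt_raise ((hL i a).2 ha) (mt (hL i _).1 hx)

lemma choice_listProfile_erase (hA : IsStrategyProof A) {L : Fin n → List X} {w : X}
    (hw : w ≠ A (listProfile L)) :
    A (listProfile fun i => (L i).erase w) = A (listProfile L) :=
  hA.choice_eq_of_isMonotoneTransformAt (injective_listProfile _) (injective_listProfile _)
    fun i => isMonotoneTransformAt_raise_erase hw _ (L i)

lemma isDecisive_univ (hA : IsStrategyProof A) (honto : IsOnto A) : IsDecisive A Finset.univ :=
  fun a _ _ => hA.choice_eq_of_forall_le honto (injective_listProfile _) fun i y => by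
    simp only [listProfile, pairLists, Finset.mem_univ, if_true]
    exact toTop_le_toTop_self _ a y

lemma not_wins_empty (hA : IsStrategyProof A) (honto : IsOnto A) {a b : X} (hab : a ≠ b) :
    ¬ Wins A ∅ a b := by
  intro h
  have hb : A (listProfile (pairLists ∅ a b)) = b :=
    hA.choice_eq_of_forall_le honto (injective_listProfile _) fun i y => by
      simp only [pairLists, listProfile, Finset.notMem_empty, if_false]
      exact toTop_le_toTop_self _ b y
  exact hab (h.symm.trans hb)

lemma wins_or_wins_of_wins_union (hA : IsStrategyProof A) (honto : IsOnto A) {S T : Finset (Fin n)}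
    (hST : Disjoint S T) {a b c : X} (hab : a ≠ b) (hac : a ≠ c) (hbc : b ≠ c)
    (h : Wins A (S ∪ T) a b) : Wins A S a c ∨ Wins A T c b := by
  set z := A (listProfile (cyclicLists S T a b c))
  have mem : z ∈ [a, b, c] :=
    hA.choice_listProfile_mem honto (fun i y => by
      unfold cyclicLists; split_ifs <;> simp only [List.mem_cons, List.not_mem_nil] <;> tauto)
      (List.mem_cons_self ..)
  have erase_eq : ∀ w, w ≠ z → A (listProfile fun i => (cyclicLists S T a b c i).erase w) = z :=
    fun w hw => hA.choice_listProfile_erase hw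
  have cases : ∀ i, (i ∈ S ∧ i ∉ T) ∨ (i ∉ S ∧ i ∈ T) ∨ (i ∉ S ∧ i ∉ T) := fun i => by
    by_cases hS : i ∈ S
    · exact .inl ⟨hS, Finset.disjoint_left.1 hST hS⟩
    · tauto
  have erase_a : (fun i => (cyclicLists S T a b c i).erase a) = pairLists T c b := by
    funext i; unfold cyclicLists pairLists
    rcases cases i with ⟨hS, hT⟩ | ⟨hS, hT⟩ | ⟨hS, hT⟩ <;> simp [hS, hT, hab.symm, hac.symm]
  have erase_b : (fun i => (cyclicLists S T a b c i).erase b) = pairLists S a c := by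
    funext i; unfold cyclicLists pairLists
    rcases cases i with ⟨hS, hT⟩ | ⟨hS, hT⟩ | ⟨hS, hT⟩ <;> simp [hS, hT, hab, hbc.symm]
  have erase_c : (fun i => (cyclicLists S T a b c i).erase c) = pairLists (S ∪ T) a b := by
    funext i; unfold cyclicLists pairLists
    rcases cases i with ⟨hS, hT⟩ | ⟨hS, hT⟩ | ⟨hS, hT⟩ <;> simp [hS, hT, hac, hbc]
  simp only [List.mem_cons, List.not_mem_nil, or_false] at mem
  rcases mem with hz | hz | hz
  · left
    rw [Wins, ← erase_b, erase_eq b (hz ▸ hab.symm), hz]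
  · rw [Wins, ← erase_c, erase_eq c (hz ▸ hbc.symm), hz] at h
    exact absurd h hab.symm
  · right
    rw [Wins, ← erase_a, erase_eq a (hz ▸ hac), hz]

end IsStrategyProof

variable {S T : Finset (Fin n)} {a b c : X}

lemma Wins.change_loser (hA : IsStrategyProof A) (honto : IsOnto A) (hab : a ≠ b) (hac : a ≠ c)
    (hbc : b ≠ c) (h : Wins A S a b) : Wins A S a c :=
  (hA.wins_or_wins_of_wins_union honto (Finset.disjoint_empty_right S) hab hac hbc
    (by rwa [Finset.union_empty])).resolve_right (hA.not_wins_empty honto hbc.symm)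

lemma Wins.change_winner (hA : IsStrategyProof A) (honto : IsOnto A) (hab : a ≠ b) (hac : a ≠ c)
    (hbc : b ≠ c) (h : Wins A S a b) : Wins A S c b :=
  (hA.wins_or_wins_of_wins_union honto (Finset.disjoint_empty_left S) hab hac hbc
    (by rwa [Finset.empty_union])).resolve_left (hA.not_wins_empty honto hac)

lemma Wins.isDecisive (hA : IsStrategyProof A) (honto : IsOnto A) (hX : 3 ≤ Fintype.card X)
    (hab : a ≠ b) (h : Wins A S a b) : IsDecisive A S := by
  have from_a : ∀ y, y ≠ a → Wins A S a y := fun y hya => by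
    rcases eq_or_ne y b with rfl | hyb
    · exact h
    · exact h.change_loser hA honto hab hya.symm hyb.symm
  have against_other : ∀ x y, y ≠ a → x ≠ y → Wins A S x y := fun x y hya hxy => by
    rcases eq_or_ne x a with rfl | hxa
    · exact from_a y hya
    · exact (from_a y hya).change_winner hA honto hya.symm hxa.symm hxy.symm
  intro x y hxy
  by_cases hya : y = a
  · obtain ⟨z, hzx, hzy⟩ := ENat.exists_ne_ne_of_three_le
      (by rw [ENat.card_eq_coe_fintype_card]; exact_mod_cast hX) x y
    exact (against_other x z (hya ▸ hzy) hzx.symm).change_loser hA honto hzx.symm hxy hzy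
  · exact against_other x y hya hxy

lemma IsDecisive.of_union (hA : IsStrategyProof A) (honto : IsOnto A) (hX : 3 ≤ Fintype.card X)
    (hST : Disjoint S T) (h : IsDecisive A (S ∪ T)) : IsDecisive A S ∨ IsDecisive A T := by
  obtain ⟨a, b, c, hab, hac, hbc⟩ := Fintype.two_lt_card_iff.1 hX
  exact (hA.wins_or_wins_of_wins_union honto hST hab hac hbc (h a b hab)).imp
    (·.isDecisive hA honto hX hac) (·.isDecisive hA honto hX hbc.symm)

lemma IsStrategyProof.exists_isDecisive_singleton (hA : IsStrategyProof A) (honto : IsOnto A)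
    (hX : 3 ≤ Fintype.card X) : ∃ d, IsDecisive A {d} := by
  obtain ⟨S, -, hS⟩ :=
    exists_minimal_le_of_wellFoundedLT (IsDecisive A) Finset.univ (hA.isDecisive_univ honto)
  obtain ⟨a, b, -, hab, -, -⟩ := Fintype.two_lt_card_iff.1 hX
  obtain ⟨d, hd⟩ : S.Nonempty := Finset.nonempty_iff_ne_empty.2 fun hS0 =>
    hA.not_wins_empty honto hab (hS0 ▸ hS.prop a b hab)
  have split : IsDecisive A ({d} ∪ S.erase d) := by
    rw [← Finset.insert_eq, Finset.insert_erase hd]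
    exact hS.prop
  refine ⟨d, (split.of_union hA honto hX ?_).resolve_right fun hE => ?_⟩
  · exact Finset.disjoint_singleton_left.2 (Finset.notMem_erase d S)
  · exact Finset.notMem_erase d S (hS.2 hE (Finset.erase_subset d S) hd)

lemma IsDecisive.le_choice (hA : IsStrategyProof A) {d : Fin n} (hd : IsDecisive A {d})
    {r : Fin n → X → ℝ} (hr : ∀ j, Injective (r j)) (x : X) : r d x ≤ r d (A r) := by
  by_contra! hlt
  have hne : x ≠ A r := by rintro rfl; exact lt_irrefl _ hlt
  have key := hA.choice_eq_of_isMonotoneTransformAt hr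
    (injective_listProfile (pairLists {d} x (A r))) fun i => ?_
  · exact hne ((hd x (A r) hne).symm.trans key)
  · by_cases hi : i = d
    · subst hi
      simp only [listProfile, pairLists, Finset.mem_singleton_self, if_true]
      exact (isMonotoneTransformAt_of_forall_le (toTop_le_toTop_self _ _)).toTop_right hlt
    · simp only [listProfile, pairLists, Finset.mem_singleton, hi, if_false]
      exact isMonotoneTransformAt_of_forall_le (toTop_le_toTop_self _ _)

end Decisive

end GibbardSatterthwaite

theorem nondictatorial_selection_is_manipulable_general
    {X : Type*} [Fintype X] {n : ℕ} (hX : 3 ≤ Fintype.card X)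
    (A : (Fin n → X → ℝ) → X)
    (honto : ∀ x : X, ∃ r : Fin n → X → ℝ,
      (∀ j : Fin n, Function.Injective (r j)) ∧ A r = x)
    (hnd : ¬ ∃ i : Fin n, ∀ r : Fin n → X → ℝ,
      (∀ j : Fin n, Function.Injective (r j)) →
      ∀ x : X, r i (A r) ≥ r i x) :
    ∃ (i : Fin n) (u : Fin n → X → ℝ) (v : X → ℝ),
      (∀ j : Fin n, Function.Injective (u j)) ∧ Function.Injective v ∧
      u i (A (Function.update u i v)) > u i (A u) := by
  classical
  by_contra hman
  push Not at hman
  obtain ⟨d, hd⟩ := GibbardSatterthwaite.IsStrategyProof.exists_isDecisive_singleton hman honto hX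
  exact hnd ⟨d, fun r hr x => hd.le_choice hman hr x⟩

/-- Contrapositive Gibbard–Satterthwaite in the cardinal-benefit setting: every onto,
non-dictatorial software architecture selection method on at least three candidate
architectures is manipulable — some stakeholder `i` with true (injective) benefits `u i`
can strictly increase her true benefit by misreporting some injective `v`. -/
theorem nondictatorial_selection_is_manipulable
    {X : Type*} [Fintype X] {n : ℕ} (hn : 1 ≤ n) (hX : 3 ≤ Fintype.card X)
    (A : (Fin n → X → ℝ) → X)
    (honto : ∀ x : X, ∃ r : Fin n → X → ℝ,
      (∀ j : Fin n, Function.Injective (r j)) ∧ A r = x)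
    (hnd : ¬ ∃ i : Fin n, ∀ r : Fin n → X → ℝ,
      (∀ j : Fin n, Function.Injective (r j)) →
      ∀ x : X, r i (A r) ≥ r i x) :
    ∃ (i : Fin n) (u : Fin n → X → ℝ) (v : X → ℝ),
      (∀ j : Fin n, Function.Injective (u j)) ∧ Function.Injective v ∧
      u i (A (Function.update u i v)) > u i (A u) :=
  nondictatorial_selection_is_manipulable_general hX A honto hnd
end

section
/- Let X be a nonempty finite set of alternatives and n ≥ 1 agents. Let A be a function assigning to every profile r = (r₁,…,rₙ) of reported benefit functions rᵢ : X → ℝ an alternative A(r) ∈ X that maximizes the total reported benefit, i.e., ∑ⱼ rⱼ(A(r)) ≥ ∑ⱼ rⱼ(x) for every x ∈ X. For each agent i, let hᵢ be an arbitrary real-valued function of the reports of the agents other than i, and define the payment pᵢ(r) = ∑_{j≠i} rⱼ(A(r)) − hᵢ(r_{−i}). Then this Groves mechanism is non-manipulable: for every agent i, every true benefit function uᵢ : X → ℝ, every profile r, and every misreport v : X → ℝ, letting r' = (r with i-th component uᵢ) and r'' = (r with i-th component v), it holds that uᵢ(A(r')) + pᵢ(r') ≥ uᵢ(A(r'')) +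 pᵢ(r''). -/
/-- **Groves mechanisms are non-manipulable.** `A` selects, for every profile of reported
benefit functions, an alternative maximizing total reported benefit; agent `i` receives the
payment `pᵢ(r) = ∑_{j≠i} rⱼ(A(r)) − hᵢ(r_{−i})`, where `hᵢ` is an arbitrary function of the
other agents' reports. Then truthful reporting weakly maximizes each agent's net benefit
(true benefit of the outcome plus payment), whatever the other agents report. -/
theorem groves_mechanism_nonmanipulable
    {X : Type*} [Fintype X] [Nonempty X] {n : ℕ} (hn : 1 ≤ n)
    (A : (Fin n → X → ℝ) → X)
    (hA : ∀ (r : Fin n → X → ℝ) (x : X), ∑ j, r j (A r) ≥ ∑ j, r j x)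
    (h : (i : Fin n) → ({j : Fin n // j ≠ i} → X → ℝ) → ℝ)
    (p : Fin n → (Fin n → X → ℝ) → ℝ)
    (hp : ∀ (i : Fin n) (r : Fin n → X → ℝ),
      p i r = (∑ j ∈ Finset.univ.erase i, r j (A r)) - h i (fun j => r j.1)) :
    ∀ (i : Fin n) (u : X → ℝ) (r : Fin n → X → ℝ) (v : X → ℝ),
      u (A (Function.update r i u)) + p i (Function.update r i u) ≥
        u (A (Function.update r i v)) + p i (Function.update r i v) := by
  intro i u r v
  set r' := Function.update r i u with hr'
  set r'' := Function.update r i v with hr''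
  rw [hp, hp]
  have hhe : (fun j : {j : Fin n // j ≠ i} => r' j.1) = fun j => r'' j.1 := by
    funext j
    simp [hr', hr'', Function.update_of_ne j.2]
  have key := hA r' (A r'')
  have hsplit : ∀ (s : Fin n → X → ℝ) (x : X),
      ∑ j, s j x = s i x + ∑ j ∈ Finset.univ.erase i, s j x := by
    intro s x
    rw [← Finset.add_sum_erase _ _ (Finset.mem_univ i)]
  have heq : ∀ x, ∑ j ∈ Finset.univ.erase i, r' j x = ∑ j ∈ Finset.univ.erase i, r'' j x := by
    intro x
    refine Finset.sum_congr rfl fun j hj => ?_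
    simp [hr', hr'', Function.update_of_ne (Finset.ne_of_mem_erase hj)]
  rw [hsplit r' (A r'), hsplit r' (A r'')] at key
  have hri : r' i = u := by simp [hr']
  rw [hri] at key
  rw [hhe]
  linarith [heq (A r'')]
end
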